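/- Suppose w is a 123-avoiding word representing a graph G = (V, E) and w = u·a·b·v has a factor ab (two consecutive letters) with a < b. Let w' = u·b·a·v be the word obtained by switching these two consecutive letters. Then w' is 123-avoiding. Moreover, if ab ∉ E and the letters a and b do not alternate in w', then w' also represents G. -/

import Mathlib

/-- Two letters `x` and `y` alternate in the word `w`: between any two occurrences of `x`
there is an occurrence of `y`, and between any two occurrences of `y` there is an
occurrence of `x`. -/
def Alternates {α : Type*} (w : List α) (x y : α) : Prop :=
  (∀ i j : ℕ, i < j → w[i]? = some x → w[j]? = some x →
      ∃ k : ℕ, i < k ∧ k < j ∧ w[k]? = some y) ∧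
  (∀ i j : ℕ, i < j → w[i]? = some y → w[j]? = some y →
      ∃ k : ℕ, i < k ∧ k < j ∧ w[k]? = some x)

/-- A word `w` over the vertex set of `G` represents `G`: every vertex occurs in `w`, and
two distinct vertices alternate in `w` iff they are adjacent in `G`. -/
def Represents {α : Type*} (G : SimpleGraph α) (w : List α) : Prop :=
  (∀ v : α, v ∈ w) ∧ ∀ x y : α, x ≠ y → (Alternates w x y ↔ G.Adj x y)

/-- A word `w` over the labels represents `G` via the (injective) labeling `f` of the
vertices: every letter of `w` is the label of a vertex, every vertex's label occurs in `w`,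
and the labels of two distinct vertices alternate in `w` iff the vertices are adjacent. -/
def RepresentsLab {V L : Type*} (G : SimpleGraph V) (f : V → L) (w : List L) : Prop :=
  (∀ l ∈ w, ∃ v : V, f v = l) ∧ (∀ v : V, f v ∈ w) ∧
  ∀ x y : V, x ≠ y → (Alternates w (f x) (f y) ↔ G.Adj x y)

/-- `w` avoids the pattern 123: it has no strictly increasing subsequence of length 3. -/
def Avoids123 {α : Type*} [LinearOrder α] (w : List α) : Prop :=
  ¬ ∃ (i j k : ℕ) (a b c : α), i < j ∧ j < k ∧
    w[i]? = some a ∧ w[j]? = some b ∧ w[k]? = some c ∧ a < b ∧ b < c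

/-- `w` avoids the pattern 132: there are no indices `i < j < k` with `w_i < w_k < w_j`. -/
def Avoids132 {α : Type*} [LinearOrder α] (w : List α) : Prop :=
  ¬ ∃ (i j k : ℕ) (a b c : α), i < j ∧ j < k ∧
    w[i]? = some a ∧ w[j]? = some b ∧ w[k]? = some c ∧ a < c ∧ c < b

/-- `w` is 2-uniform: every letter occurring in `w` occurs exactly twice. -/
def TwoUniform {α : Type*} (w : List α) : Prop :=
  ∀ x ∈ w, ∃ i j : ℕ, i ≠ j ∧ w[i]? = some x ∧ w[j]? = some x ∧
    ∀ k : ℕ, w[k]? = some x → k = i ∨ k = j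

/-- `s` and `τ` are order-isomorphic words: same length and entries in corresponding
positions compare the same way. -/
def OrderIsoWords {α β : Type*} [LinearOrder α] [LinearOrder β]
    (s : List α) (τ : List β) : Prop :=
  s.length = τ.length ∧
  ∀ (i j : ℕ) (a b : α) (c d : β),
    s[i]? = some a → s[j]? = some b → τ[i]? = some c → τ[j]? = some d →
    (a < b ↔ c < d)

/-- `w` contains the pattern `τ`: some subsequence of `w` is order-isomorphic to `τ`. -/
def ContainsPattern {α β : Type*} [LinearOrder α] [LinearOrder β]
    (w : List α) (τ : List β) : Prop :=
  ∃ s : List α, s.Sublist w ∧ OrderIsoWords s τ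

/-- `G` is 123-representable: after relabeling the vertices injectively by elements of some
linearly ordered set, `G` is represented by a 123-avoiding word. -/
def Rep123 {V : Type*} (G : SimpleGraph V) : Prop :=
  ∃ (L : Type) (inst : LinearOrder L) (f : V → L), Function.Injective f ∧
    ∃ w : List L, @Avoids123 L inst w ∧ RepresentsLab G f w

/-- `G` is 132-representable: after relabeling the vertices injectively by elements of some
linearly ordered set, `G` is represented by a 132-avoiding word. -/
def Rep132 {V : Type*} (G : SimpleGraph V) : Prop :=
  ∃ (L : Type) (inst : LinearOrder L) (f : V → L), Function.Injective f ∧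
    ∃ w : List L, @Avoids132 L inst w ∧ RepresentsLab G f w

/-!
Exchanging the adjacent positions `n = |u|` and `n + 1` is the transposition `(n n+1)` of
indices, which preserves the relative order of every pair of positions except that pair itself.
An increasing pattern in `u·b·a·v` cannot use both swapped positions since `b ≥ a`, so it pulls
back to one in `u·a·b·v`. Likewise, whether `x` and `y` alternate only changes when the swapped
pair is an occurrence of `x` next to an occurrence of `y`, i.e. when `{x, y} = {a, b}`; for that
pair the two hypotheses give non-adjacency and non-alternation directly.
-/

section SwapAdjacent

variable {α : Type*}

def SeparatesOccurrences (w : List α) (x y : α) : Prop :=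
  ∀ i j : ℕ, i < j → w[i]? = some x → w[j]? = some x →
    ∃ k : ℕ, i < k ∧ k < j ∧ w[k]? = some y

theorem alternates_iff_separatesOccurrences {w : List α} {x y : α} :
    Alternates w x y ↔ SeparatesOccurrences w x y ∧ SeparatesOccurrences w y x :=
  Iff.rfl

theorem Alternates.symm {w : List α} {x y : α} (h : Alternates w x y) : Alternates w y x :=
  And.symm h

theorem swap_lt_swap {n i j : ℕ} (hij : i < j) (h : ¬(i = n ∧ j = n + 1)) :
    Equiv.swap n (n + 1) i < Equiv.swap n (n + 1) j := by
  simp only [Equiv.swap_apply_def]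
  split_ifs <;> omega

namespace List

theorem getElem?_append_cons_length (u l : List α) (p : α) :
    (u ++ p :: l)[u.length]? = some p := by
  simp

theorem getElem?_append_cons_length_succ (u l : List α) (p q : α) :
    (u ++ p :: q :: l)[u.length + 1]? = some q := by
  simp

theorem getElem?_append_cons_cons_swap (u v : List α) (p q : α) (k : ℕ) :
    (u ++ q :: p :: v)[k]? = (u ++ p :: q :: v)[Equiv.swap u.length (u.length + 1) k]? := by
  rw [Equiv.swap_apply_def]
  split_ifs with hk₁ hk₂
  · simp [hk₁]
  · simp [hk₂]
  · rcases lt_or_ge k u.length with hk | hk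
    · simp [getElem?_append_left hk]
    · obtain ⟨m, rfl⟩ : ∃ m, k = u.length + (m + 2) := ⟨k - u.length - 2, by omega⟩
      simp [getElem?_append_right]

theorem swap_length_append_cons_cons_of_getElem? {u v : List α} {p q x : α} {i : ℕ}
    (hi : (u ++ p :: q :: v)[i]? = some x) (hxp : x ≠ p) (hxq : x ≠ q) :
    Equiv.swap u.length (u.length + 1) i = i := by
  refine Equiv.swap_apply_of_ne_of_ne ?_ ?_ <;> rintro rfl <;> simp_all

end List

open List

theorem Avoids123.swap_adjacent [LinearOrder α] {u v : List α} {a b : α} (hab : a ≤ b)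
    (h : Avoids123 (u ++ a :: b :: v)) : Avoids123 (u ++ b :: a :: v) := by
  have not_swapped_pair : ∀ {i j : ℕ} {c d : α}, (u ++ b :: a :: v)[i]? = some c →
      (u ++ b :: a :: v)[j]? = some d → c < d → ¬(i = u.length ∧ j = u.length + 1) := by
    rintro i j c d hi hj hcd ⟨rfl, rfl⟩
    simp only [getElem?_append_cons_length, getElem?_append_cons_length_succ,
      Option.some.injEq] at hi hj
    subst hi hj
    exact hab.not_gt hcd
  rintro ⟨i, j, k, c, d, e, hij, hjk, hi, hj, hk, hcd, hde⟩
  have hij' := not_swapped_pair hi hj hcd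
  have hjk' := not_swapped_pair hj hk hde
  rw [getElem?_append_cons_cons_swap] at hi hj hk
  exact h ⟨_, _, _, c, d, e, swap_lt_swap hij hij', swap_lt_swap hjk hjk', hi, hj, hk, hcd, hde⟩

theorem SeparatesOccurrences.swap_adjacent_of_ne_left {u v : List α} {p q x y : α}
    (hxp : x ≠ p) (hxq : x ≠ q) (h : SeparatesOccurrences (u ++ p :: q :: v) x y) :
    SeparatesOccurrences (u ++ q :: p :: v) x y := by
  intro i j hij hi hj
  have hσi : Equiv.swap u.length (u.length + 1) i = i :=
    swap_length_append_cons_cons_of_getElem? hi hxq hxp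
  have hσj : Equiv.swap u.length (u.length + 1) j = j :=
    swap_length_append_cons_cons_of_getElem? hj hxq hxp
  rw [getElem?_append_cons_cons_swap, hσi] at hi
  rw [getElem?_append_cons_cons_swap, hσj] at hj
  obtain ⟨k, hik, hkj, hk⟩ := h i j hij hi hj
  refine ⟨Equiv.swap u.length (u.length + 1) k, ?_, ?_, ?_⟩
  · simpa only [hσi] using swap_lt_swap (n := u.length) hik (by rintro ⟨rfl, -⟩; simp at hσi)
  · simpa only [hσj] using swap_lt_swap (n := u.length) hkj (by rintro ⟨-, rfl⟩; simp at hσj)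
  · rwa [getElem?_append_cons_cons_swap, Equiv.swap_apply_self]

theorem SeparatesOccurrences.swap_adjacent_of_ne_right {u v : List α} {p q x y : α}
    (hyp : y ≠ p) (hyq : y ≠ q) (h : SeparatesOccurrences (u ++ p :: q :: v) x y) :
    SeparatesOccurrences (u ++ q :: p :: v) x y := by
  intro i j hij hi hj
  -- the swapped pair itself cannot consist of two occurrences of `x`: nothing lies between them
  have hij' : ¬(i = u.length ∧ j = u.length + 1) := by
    rintro ⟨rfl, rfl⟩
    rw [getElem?_append_cons_length] at hi
    rw [getElem?_append_cons_length_succ] at hj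
    obtain ⟨k, hik, hkj, -⟩ := h _ _ (Nat.lt_succ_self _)
      (by rw [getElem?_append_cons_length, hj]) (by rw [getElem?_append_cons_length_succ, hi])
    omega
  rw [getElem?_append_cons_cons_swap] at hi hj
  obtain ⟨k, hik, hkj, hk⟩ := h _ _ (swap_lt_swap hij hij') hi hj
  have hσk : Equiv.swap u.length (u.length + 1) k = k :=
    swap_length_append_cons_cons_of_getElem? hk hyp hyq
  refine ⟨k, ?_, ?_, by rwa [getElem?_append_cons_cons_swap, hσk]⟩
  · simpa only [Equiv.swap_apply_self, hσk] using
      swap_lt_swap (n := u.length) hik (by rintro ⟨-, rfl⟩; simp at hσk)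
  · simpa only [Equiv.swap_apply_self, hσk] using
      swap_lt_swap (n := u.length) hkj (by rintro ⟨rfl, -⟩; simp at hσk)

theorem SeparatesOccurrences.swap_adjacent {u v : List α} {p q x y : α}
    (hxy : (x ≠ p ∧ x ≠ q) ∨ (y ≠ p ∧ y ≠ q))
    (h : SeparatesOccurrences (u ++ p :: q :: v) x y) :
    SeparatesOccurrences (u ++ q :: p :: v) x y :=
  hxy.elim (fun hx => h.swap_adjacent_of_ne_left hx.1 hx.2)
    (fun hy => h.swap_adjacent_of_ne_right hy.1 hy.2)

theorem alternates_swap_adjacent_iff {u v : List α} {p q x y : α}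
    (hxy : (x ≠ p ∧ x ≠ q) ∨ (y ≠ p ∧ y ≠ q)) :
    Alternates (u ++ q :: p :: v) x y ↔ Alternates (u ++ p :: q :: v) x y := by
  have hxy' : (x ≠ q ∧ x ≠ p) ∨ (y ≠ q ∧ y ≠ p) := hxy.imp And.symm And.symm
  simp only [alternates_iff_separatesOccurrences]
  exact ⟨.imp (.swap_adjacent hxy') (.swap_adjacent hxy'.symm),
    .imp (.swap_adjacent hxy) (.swap_adjacent hxy.symm)⟩

theorem Represents.swap_adjacent {G : SimpleGraph α} {u v : List α} {p q : α}
    (h : Represents G (u ++ p :: q :: v)) (hpq : ¬ G.Adj p q)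
    (halt : ¬ Alternates (u ++ q :: p :: v) p q) : Represents G (u ++ q :: p :: v) := by
  obtain ⟨hmem, hiff⟩ := h
  have hperm : (u ++ p :: q :: v).Perm (u ++ q :: p :: v) := .append_left u (.swap q p v)
  refine ⟨fun z => hperm.mem_iff.1 (hmem z), fun x y hxy => ?_⟩
  by_cases hpair : (x = p ∧ y = q) ∨ (x = q ∧ y = p)
  · rcases hpair with ⟨rfl, rfl⟩ | ⟨rfl, rfl⟩
    · exact iff_of_false halt hpq
    · exact iff_of_false (fun h => halt h.symm) (fun h => hpq h.symm)
  · rw [alternates_swap_adjacent_iff (by grind), hiff x y hxy]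

end SwapAdjacent

/-- if the 123-avoiding word `w = u·a·b·v` (with `a < b` consecutive) represents
`G`, then the word `w' = u·b·a·v` obtained by switching the two consecutive letters is also
123-avoiding; moreover, if `ab ∉ E` and `a`, `b` do not alternate in `w'`, then `w'` also
represents `G`. -/
theorem stmt_2 {α : Type*} [LinearOrder α] (G : SimpleGraph α) (u v : List α) (a b : α)
    (hab : a < b)
    (havoid : Avoids123 (u ++ a :: b :: v))
    (hrep : Represents G (u ++ a :: b :: v)) :
    Avoids123 (u ++ b :: a :: v) ∧
      (¬ G.Adj a b → ¬ Alternates (u ++ b :: a :: v) a b →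
        Represents G (u ++ b :: a :: v)) :=
  ⟨havoid.swap_adjacent hab.le, hrep.swap_adjacent⟩
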